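/- arXiv:1510.05396 — 3 statements merged into one kernel-verified Lean document; each statement's English description precedes it below -/
import Mathlib

section
/- Let T : ℝⁿ → ℝⁿ be a Shapley operator and α ∈ ℝ. If the sub-eigenspace S_α(T) = { x ∈ ℝⁿ : T(x) ≥ α𝟙 + x } is nonempty, then liminf_{k→∞} T^k(0)/k ≥ α𝟙 (componentwise, where T^k denotes the k-th iterate). -/
/-!
A sub-eigenvector `α • 1 + x ≤ T x` propagates along the orbit by monotonicity and additive
homogeneity: `(k * α) • 1 + x ≤ T^[k] x`. Since `x ≤ 0 + M • 1` for `M = max x`, the same two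
properties give `T^[k] x ≤ T^[k] 0 + M • 1`, so `T^[k] 0 ≥ k * α + O(1)` componentwise. The bound
`T^[k] 0 ≤ (k * max (T 0)) • 1`, obtained the same way, keeps the liminf from being a junk value.
-/

open Filter

def IsAddHomogeneous {ι : Type*} (T : (ι → ℝ) → (ι → ℝ)) : Prop :=
  ∀ (x : ι → ℝ) (c : ℝ), T (x + c • (1 : ι → ℝ)) = T x + c • (1 : ι → ℝ)

namespace IsAddHomogeneous

variable {ι : Type*} {T : (ι → ℝ) → (ι → ℝ)}

theorem iterate (hT : IsAddHomogeneous T) (k : ℕ) : IsAddHomogeneous T^[k] := by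
  induction k with
  | zero => intro x c; rfl
  | succ k ih => intro x c; rw [Function.iterate_succ_apply', Function.iterate_succ_apply', ih, hT]

theorem smul_one_add_le_iterate (hT : IsAddHomogeneous T) (hmono : Monotone T) {α : ℝ}
    {x : ι → ℝ} (hx : α • 1 + x ≤ T x) (k : ℕ) : ((k : ℝ) * α) • 1 + x ≤ T^[k] x := by
  induction k with
  | zero => simp
  | succ k ih =>
    calc ((↑(k + 1) : ℝ) * α) • 1 + x = ((k * α) • 1 + x) + α • 1 := by push_cast; module
      _ ≤ T^[k] x + α • 1 := by gcongr
      _ = T^[k] (x + α • 1) := (hT.iterate k x α).symm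
      _ ≤ T^[k] (T x) := hmono.iterate k (by rwa [add_comm])
      _ = T^[k + 1] x := (Function.iterate_succ_apply T k x).symm

theorem iterate_le_smul_one_add (hT : IsAddHomogeneous T) (hmono : Monotone T) {β : ℝ}
    {x : ι → ℝ} (hx : T x ≤ β • 1 + x) (k : ℕ) : T^[k] x ≤ ((k : ℝ) * β) • 1 + x := by
  induction k with
  | zero => simp
  | succ k ih =>
    calc T^[k + 1] x = T^[k] (T x) := Function.iterate_succ_apply T k x
      _ ≤ T^[k] (x + β • 1) := hmono.iterate k (by rwa [add_comm])
      _ = T^[k] x + β • 1 := hT.iterate k x β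
      _ ≤ ((k * β) • 1 + x) + β • 1 := by gcongr
      _ = ((↑(k + 1) : ℝ) * β) • 1 + x := by push_cast; module

theorem iterate_le_iterate_add (hT : IsAddHomogeneous T) (hmono : Monotone T) {x y : ι → ℝ}
    {c : ℝ} (hxy : x ≤ y + c • 1) (k : ℕ) : T^[k] x ≤ T^[k] y + c • 1 :=
  (hmono.iterate k hxy).trans_eq (hT.iterate k y c)

end IsAddHomogeneous

theorem exists_le_smul_one {ι : Type*} [Finite ι] (x : ι → ℝ) : ∃ c : ℝ, x ≤ c • 1 := by
  obtain ⟨c, hc⟩ := Finite.bddAbove_range x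
  exact ⟨c, fun j => by simpa using hc (Set.mem_range_self j)⟩

theorem le_liminf_div_natCast_of_linear_bounds {u : ℕ → ℝ} {α a β : ℝ}
    (hlow : ∀ k : ℕ, k * α + a ≤ u k) (hup : ∀ k : ℕ, u k ≤ k * β) :
    α ≤ liminf (fun k : ℕ => u k / k) atTop := by
  have hlim : Tendsto (fun k : ℕ => α + a / k) atTop (nhds α) := by
    simpa using tendsto_const_nhds.add (tendsto_const_div_atTop_nhds_zero_nat a)
  have hcobdd : IsCoboundedUnder (· ≥ ·) atTop (fun k : ℕ => u k / k) := by
    refine isCoboundedUnder_ge_of_eventually_le atTop (x := β) ?_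
    filter_upwards [eventually_gt_atTop 0] with k hk
    rw [div_le_iff₀ (by positivity)]
    linarith [hup k]
  rw [← hlim.liminf_eq]
  refine liminf_le_liminf ?_ hlim.isBoundedUnder_ge hcobdd
  filter_upwards [eventually_gt_atTop 0] with k hk
  rw [le_div_iff₀ (by positivity), add_mul, div_mul_cancel₀ _ (by positivity)]
  linarith [hlow k]

theorem stmt2 (n : ℕ) (T : (Fin n → ℝ) → (Fin n → ℝ))
    (hmono : Monotone T)
    (hadd : ∀ (x : Fin n → ℝ) (c : ℝ), T (x + c • (1 : Fin n → ℝ)) = T x + c • (1 : Fin n → ℝ))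
    (α : ℝ) (hne : ∃ x : Fin n → ℝ, α • (1 : Fin n → ℝ) + x ≤ T x) :
    ∀ i : Fin n, α ≤ Filter.atTop.liminf (fun k : ℕ => T^[k] 0 i / (k : ℝ)) := by
  intro i
  obtain ⟨x, hx⟩ := hne
  obtain ⟨M, hxM⟩ := exists_le_smul_one x
  obtain ⟨β, hβ⟩ := exists_le_smul_one (T 0)
  have hT : IsAddHomogeneous T := hadd
  refine le_liminf_div_natCast_of_linear_bounds (a := x i - M) (β := β) (fun k => ?_) (fun k => ?_)
  · have hsub := hT.smul_one_add_le_iterate hmono hx k i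
    have hcomp := hT.iterate_le_iterate_add hmono (y := 0) (by simpa using hxM) k i
    simp only [Pi.add_apply, Pi.smul_apply, Pi.one_apply, smul_eq_mul, mul_one] at hsub hcomp
    linarith
  · simpa using hT.iterate_le_smul_one_add hmono (x := 0) (by simpa using hβ) k i
end

section
/- Let T : ℝⁿ → ℝⁿ be a Shapley operator. If there exists a bounded (in Hilbert's seminorm) nonempty slice space S_α^β(T), then the set of solutions u of the ergodic equation T(u) = λ𝟙 + u, for the (then unique) value λ, is nonempty; moreover the eigenvalue λ is unique: if T(u) = λ𝟙 + u and T(v) = μ𝟙 + v for some u, v ∈ ℝⁿ, then λ = μ. -/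
section Aux

variable {n : ℕ} (T : (Fin n → ℝ) → (Fin n → ℝ))

lemma shapley_add (hadd : ∀ (x : Fin n → ℝ) (c : ℝ),
      T (x + c • (1 : Fin n → ℝ)) = T x + c • (1 : Fin n → ℝ)) :
    ∀ (x : Fin n → ℝ) (c : ℝ) (i : Fin n), T (fun j => x j + c) i = T x i + c := by
  intro x c i
  have h := hadd x c
  have e1 : x + c • (1 : Fin n → ℝ) = fun j => x j + c := by
    funext j; simp
  rw [e1] at h
  rw [h]; simp

lemma shapley_shift (hadd : ∀ (x : Fin n → ℝ) (c : ℝ),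
      T (x + c • (1 : Fin n → ℝ)) = T x + c • (1 : Fin n → ℝ)) :
    ∀ (x : Fin n → ℝ) (c : ℝ) (i : Fin n), T (fun j => x j - c) i = T x i - c := by
  intro x c i
  have e : (fun j => x j - c) = fun j => x j + (-c) := by funext j; ring
  rw [e, shapley_add T hadd x (-c) i]; ring

lemma shapley_comp (hmono : Monotone T)
    (hadd : ∀ (x : Fin n → ℝ) (c : ℝ),
      T (x + c • (1 : Fin n → ℝ)) = T x + c • (1 : Fin n → ℝ)) :
    ∀ (x y : Fin n → ℝ) (d : ℝ), (∀ j, x j ≤ y j + d) → ∀ i, T x i ≤ T y i + d := by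
  intro x y d h i
  have h2 : T x ≤ T (fun j => y j + d) := hmono (by intro j; exact h j)
  calc T x i ≤ T (fun j => y j + d) i := h2 i
    _ = T y i + d := shapley_add T hadd y d i

lemma shapley_iter_add (hadd : ∀ (x : Fin n → ℝ) (c : ℝ),
      T (x + c • (1 : Fin n → ℝ)) = T x + c • (1 : Fin n → ℝ)) :
    ∀ (m : ℕ) (x : Fin n → ℝ) (c : ℝ) (i : Fin n),
      T^[m] (fun j => x j + c) i = T^[m] x i + c := by
  intro m
  induction m with
  | zero => intro x c i; simp
  | succ m ih =>
    intro x c i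
    rw [Function.iterate_succ_apply, Function.iterate_succ_apply]
    have e : T (fun j => x j + c) = fun j => T x j + c := by
      funext j; exact shapley_add T hadd x c j
    rw [e]
    exact ih (T x) c i

lemma shapley_iter_comp (hmono : Monotone T)
    (hadd : ∀ (x : Fin n → ℝ) (c : ℝ),
      T (x + c • (1 : Fin n → ℝ)) = T x + c • (1 : Fin n → ℝ)) :
    ∀ (m : ℕ) (x y : Fin n → ℝ) (d : ℝ), (∀ j, x j ≤ y j + d) →
      ∀ i, T^[m] x i ≤ T^[m] y i + d := by
  intro m x y d h i
  have h2 : T^[m] x ≤ T^[m] (fun j => y j + d) := (hmono.iterate m) (by intro j; exact h j)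
  calc T^[m] x i ≤ T^[m] (fun j => y j + d) i := h2 i
    _ = T^[m] y i + d := shapley_iter_add T hadd m y d i

lemma shapley_iter_step (hadd : ∀ (x : Fin n → ℝ) (c : ℝ),
      T (x + c • (1 : Fin n → ℝ)) = T x + c • (1 : Fin n → ℝ)) :
    ∀ (k : ℕ) (y : Fin n → ℝ) (c : ℝ) (i : Fin n),
      T (fun j => T^[k] y j - c) i = T^[k+1] y i - c := by
  intro k y c i
  rw [shapley_shift T hadd (T^[k] y) c i, ← Function.iterate_succ_apply' T k y]

lemma real_le_of_forall_pos {a b : ℝ} (h : ∀ ε : ℝ, 0 < ε → a ≤ b + ε) : a ≤ b := by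
  by_contra hc
  push_neg at hc
  have := h ((a - b) / 2) (by linarith)
  linarith

lemma shapley_uniq_le (hn : 0 < n) (hmono : Monotone T)
    (hadd : ∀ (x : Fin n → ℝ) (c : ℝ),
      T (x + c • (1 : Fin n → ℝ)) = T x + c • (1 : Fin n → ℝ))
    (lam mu : ℝ) (u v : Fin n → ℝ)
    (hu : T u = lam • (1 : Fin n → ℝ) + u) (hv : T v = mu • (1 : Fin n → ℝ) + v) :
    lam ≤ mu := by
  haveI : Nonempty (Fin n) := ⟨⟨0, hn⟩⟩
  set i0 : Fin n := ⟨0, hn⟩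
  have hu' : ∀ i, T u i = lam + u i := by intro i; rw [hu]; simp
  have hv' : ∀ i, T v i = mu + v i := by intro i; rw [hv]; simp
  have hku : ∀ (k : ℕ) (i : Fin n), T^[k] u i = k * lam + u i := by
    intro k
    induction k with
    | zero => intro i; simp
    | succ k ih =>
      intro i
      rw [Function.iterate_succ_apply']
      have e : T^[k] u = fun j => u j + k * lam := by
        funext j; rw [ih j]; ring
      rw [e, shapley_add T hadd u (k * lam) i, hu' i]
      push_cast; ring
  have hkv : ∀ (k : ℕ) (i : Fin n), T^[k] v i = k * mu + v i := by
    intro k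
    induction k with
    | zero => intro i; simp
    | succ k ih =>
      intro i
      rw [Function.iterate_succ_apply']
      have e : T^[k] v = fun j => v j + k * mu := by
        funext j; rw [ih j]; ring
      rw [e, shapley_add T hadd v (k * mu) i, hv' i]
      push_cast; ring
  set d : ℝ := ⨆ j, (u j - v j) with hd
  have hdle : ∀ j, u j ≤ v j + d := by
    intro j
    have : u j - v j ≤ d := by
      rw [hd]
      exact le_ciSup (f := fun j => u j - v j) (Set.Finite.bddAbove (Set.finite_range _)) j
    linarith
  have key : ∀ k : ℕ, (k : ℝ) * lam + u i0 ≤ (k : ℝ) * mu + v i0 + d := by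
    intro k
    have := shapley_iter_comp T hmono hadd k u v d hdle i0
    rw [hku k i0, hkv k i0] at this
    linarith
  by_contra hc
  push_neg at hc
  obtain ⟨k, hk⟩ := exists_nat_gt ((v i0 + d - u i0) / (lam - mu))
  have hpos : (0 : ℝ) < lam - mu := by linarith
  have h2 : v i0 + d - u i0 < (k : ℝ) * (lam - mu) := by
    rw [div_lt_iff₀ hpos] at hk
    linarith
  have := key k
  nlinarith

end Aux

theorem stmt11 (n : ℕ) (hn : 0 < n) (T : (Fin n → ℝ) → (Fin n → ℝ))
    (hmono : Monotone T)
    (hadd : ∀ (x : Fin n → ℝ) (c : ℝ), T (x + c • (1 : Fin n → ℝ)) = T x + c • (1 : Fin n → ℝ))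
    (hslice : ∃ α β : ℝ,
      (∃ x : Fin n → ℝ, α • (1 : Fin n → ℝ) + x ≤ T x ∧ T x ≤ β • (1 : Fin n → ℝ) + x) ∧
      (∃ C : ℝ, ∀ x : Fin n → ℝ,
        α • (1 : Fin n → ℝ) + x ≤ T x → T x ≤ β • (1 : Fin n → ℝ) + x →
        (⨆ i, x i) - (⨅ i, x i) ≤ C)) :
    (∃ (lam : ℝ) (u : Fin n → ℝ), T u = lam • (1 : Fin n → ℝ) + u) ∧
    (∀ (lam mu : ℝ) (u v : Fin n → ℝ),
      T u = lam • (1 : Fin n → ℝ) + u → T v = mu • (1 : Fin n → ℝ) + v → lam = mu) := by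
  constructor
  case right =>
    intro lam mu u v hu hv
    exact le_antisymm (shapley_uniq_le T hn hmono hadd lam mu u v hu hv)
      (shapley_uniq_le T hn hmono hadd mu lam v u hv hu)
  case left =>
    obtain ⟨α, β, ⟨x0, hx0a, hx0b⟩, C, hC⟩ := hslice
    haveI : Nonempty (Fin n) := ⟨⟨0, hn⟩⟩
    set i0 : Fin n := ⟨0, hn⟩ with hi0
    have hx0a' : ∀ i, α + x0 i ≤ T x0 i := by
      intro i; have := hx0a i; simpa using this
    have hx0b' : ∀ i, T x0 i ≤ β + x0 i := by
      intro i; have := hx0b i; simpa using this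
    have hC' : ∀ x : Fin n → ℝ, (∀ i, α + x i ≤ T x i) → (∀ i, T x i ≤ β + x i) →
        (⨆ i, x i) - (⨅ i, x i) ≤ C := by
      intro x h1 h2
      exact hC x (by intro i; simpa using h1 i) (by intro i; simpa using h2 i)
    -- the orbit stays in the slice space
    have hS : ∀ k : ℕ, (∀ i, α + T^[k] x0 i ≤ T (T^[k] x0) i) ∧
        (∀ i, T (T^[k] x0) i ≤ β + T^[k] x0 i) := by
      intro k
      induction k with
      | zero => simpa using ⟨hx0a', hx0b'⟩
      | succ k ih =>
        rw [Function.iterate_succ_apply']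
        constructor
        · intro i
          have := shapley_comp T hmono hadd (T^[k] x0) (T (T^[k] x0)) (-α)
            (fun j => by have := ih.1 j; linarith) i
          linarith
        · intro i
          have := shapley_comp T hmono hadd (T (T^[k] x0)) (T^[k] x0) β
            (fun j => by have := ih.2 j; linarith) i
          linarith
    have hCpos : (0 : ℝ) ≤ C := by
      have h := hC' x0 hx0a' hx0b'
      have h1 : x0 i0 ≤ ⨆ i, x0 i := le_ciSup (Set.Finite.bddAbove (Set.finite_range _)) i0
      have h2 : ⨅ i, x0 i ≤ x0 i0 := ciInf_le (Set.Finite.bddBelow (Set.finite_range _)) i0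
      linarith
    have hup : ∀ (k : ℕ) (i : Fin n), T^[k] x0 i ≤ T^[k] x0 i0 + C := by
      intro k i
      have h := hC' (T^[k] x0) (hS k).1 (hS k).2
      have h1 : T^[k] x0 i ≤ ⨆ j, T^[k] x0 j :=
        le_ciSup (Set.Finite.bddAbove (Set.finite_range _)) i
      have h2 : ⨅ j, T^[k] x0 j ≤ T^[k] x0 i0 :=
        ciInf_le (Set.Finite.bddBelow (Set.finite_range _)) i0
      linarith
    have hlo : ∀ (k : ℕ) (i : Fin n), T^[k] x0 i0 - C ≤ T^[k] x0 i := by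
      intro k i
      have h := hC' (T^[k] x0) (hS k).1 (hS k).2
      have h1 : T^[k] x0 i0 ≤ ⨆ j, T^[k] x0 j :=
        le_ciSup (Set.Finite.bddAbove (Set.finite_range _)) i0
      have h2 : ⨅ j, T^[k] x0 j ≤ T^[k] x0 i := ciInf_le (Set.Finite.bddBelow (Set.finite_range _)) i
      linarith
    -- two-sided subadditivity of c k := T^[k] x0 i0
    have hsub : ∀ m k : ℕ, T^[m + k] x0 i0 ≤ T^[m] x0 i0 + T^[k] x0 i0 - x0 i0 + 2 * C := by
      intro m k
      have hcmp : ∀ j, T^[k] x0 j ≤ x0 j + (T^[k] x0 i0 - x0 i0 + 2 * C) := by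
        intro j
        have h1 := hup k j
        have h2 := hlo 0 j
        simp only [Function.iterate_zero_apply] at h2
        linarith
      have := shapley_iter_comp T hmono hadd m (T^[k] x0) x0 _ hcmp i0
      rw [← Function.iterate_add_apply] at this
      linarith
    have hsup2 : ∀ m k : ℕ, T^[m] x0 i0 + T^[k] x0 i0 - x0 i0 - 2 * C ≤ T^[m + k] x0 i0 := by
      intro m k
      have hcmp : ∀ j, x0 j ≤ T^[k] x0 j + (x0 i0 - T^[k] x0 i0 + 2 * C) := by
        intro j
        have h1 := hlo k j
        have h2 := hup 0 j
        simp only [Function.iterate_zero_apply] at h2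
        linarith
      have := shapley_iter_comp T hmono hadd m x0 (T^[k] x0) _ hcmp i0
      rw [← Function.iterate_add_apply] at this
      linarith
    -- iterated versions
    have hAsub : ∀ j k : ℕ, T^[(j+1)*k] x0 i0 - x0 i0 + 2*C ≤
        ((j:ℝ)+1) * (T^[k] x0 i0 - x0 i0 + 2*C) := by
      intro j k
      induction j with
      | zero => simp
      | succ j ih =>
        have e : (j+2)*k = (j+1)*k + k := by ring
        rw [e]
        have h := hsub ((j+1)*k) k
        push_cast
        push_cast at ih
        linarith
    have hAsup : ∀ j k : ℕ, ((j:ℝ)+1) * (T^[k] x0 i0 - x0 i0 - 2*C) ≤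
        T^[(j+1)*k] x0 i0 - x0 i0 - 2*C := by
      intro j k
      induction j with
      | zero => simp
      | succ j ih =>
        have e : (j+2)*k = (j+1)*k + k := by ring
        rw [e]
        have h := hsup2 ((j+1)*k) k
        push_cast
        push_cast at ih
        linarith
    -- the eigenvalue
    have hbdd : BddBelow (Set.range fun j : ℕ => (T^[j+1] x0 i0 - x0 i0 + 2*C) / ((j:ℝ)+1)) := by
      refine ⟨T^[1] x0 i0 - x0 i0 - 2*C, ?_⟩
      rintro y ⟨j, rfl⟩
      have hjpos : (0:ℝ) < (j:ℝ)+1 := by positivity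
      rw [le_div_iff₀ hjpos]
      have h1 := hAsup j 1
      have e : (j+1)*1 = j+1 := by ring
      rw [e] at h1
      nlinarith [hCpos]
    set lam : ℝ := ⨅ j : ℕ, (T^[j+1] x0 i0 - x0 i0 + 2*C) / ((j:ℝ)+1) with hlam
    have hlamA : ∀ k : ℕ, (k:ℝ) * lam ≤ T^[k] x0 i0 - x0 i0 + 2*C := by
      intro k
      cases k with
      | zero => simp; linarith
      | succ k =>
        have hkpos : (0:ℝ) < (k:ℝ)+1 := by positivity
        have h : lam ≤ (T^[k+1] x0 i0 - x0 i0 + 2*C) / ((k:ℝ)+1) := by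
          rw [hlam]
          exact ciInf_le hbdd k
        rw [le_div_iff₀ hkpos] at h
        push_cast
        nlinarith
    have hlamB : ∀ k : ℕ, T^[k] x0 i0 - x0 i0 - 2*C ≤ (k:ℝ) * lam := by
      intro k
      cases k with
      | zero => simp; linarith
      | succ K =>
        have hKpos : (0:ℝ) < (K:ℝ)+1 := by positivity
        have key : (T^[K+1] x0 i0 - x0 i0 - 2*C) / ((K:ℝ)+1) ≤ lam := by
          rw [hlam]
          apply le_ciInf
          intro j
          have hjpos : (0:ℝ) < (j:ℝ)+1 := by positivity
          rw [div_le_div_iff₀ hKpos hjpos]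
          have h1 := hAsup j (K+1)
          have h2 := hAsub K (j+1)
          have hcomm : (j+1)*(K+1) = (K+1)*(j+1) := Nat.mul_comm _ _
          rw [hcomm] at h1
          nlinarith [hCpos]
        rw [div_le_iff₀ hKpos] at key
        push_cast
        nlinarith
    -- bounds on the normalized orbit
    have hzub : ∀ (k : ℕ) (i : Fin n), T^[k] x0 i - (k:ℝ)*lam ≤ x0 i0 + 3*C := by
      intro k i
      have h1 := hup k i
      have h2 := hlamB k
      linarith
    have hzlb : ∀ (k : ℕ) (i : Fin n), x0 i0 - 3*C ≤ T^[k] x0 i - (k:ℝ)*lam := by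
      intro k i
      have h1 := hlo k i
      have h2 := hlamA k
      linarith
    -- the tail suprema
    set u : ℕ → Fin n → ℝ := fun m i => ⨆ k : ℕ, (T^[m+k] x0 i - ((m+k:ℕ):ℝ)*lam) with hu_def
    have hbddu : ∀ (m : ℕ) (i : Fin n),
        BddAbove (Set.range fun k : ℕ => T^[m+k] x0 i - ((m+k:ℕ):ℝ)*lam) := by
      intro m i
      refine ⟨x0 i0 + 3*C, ?_⟩
      rintro y ⟨k, rfl⟩
      exact hzub (m+k) i
    have hu_ge : ∀ (m k : ℕ) (i : Fin n), T^[m+k] x0 i - ((m+k:ℕ):ℝ)*lam ≤ u m i := by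
      intro m k i
      rw [hu_def]
      exact le_ciSup (hbddu m i) k
    have hu_le : ∀ (m : ℕ) (i : Fin n), u m i ≤ x0 i0 + 3*C := by
      intro m i
      rw [hu_def]
      exact ciSup_le fun k => hzub (m+k) i
    have hu_lb : ∀ (m : ℕ) (i : Fin n), x0 i0 - 3*C ≤ u m i :=
      fun m i => le_trans (hzlb (m+0) i) (hu_ge m 0 i)
    have hu_anti : ∀ (m : ℕ) (i : Fin n), u (m+1) i ≤ u m i := by
      intro m i
      rw [hu_def]
      apply ciSup_le
      intro k
      have e : m+1+k = m+(k+1) := by omega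
      rw [e]
      exact hu_ge m (k+1) i
    have hu_super : ∀ (m : ℕ) (i : Fin n), lam + u (m+1) i ≤ T (u m) i := by
      intro m i
      have h : u (m+1) i ≤ T (u m) i - lam := by
        have e2 : u (m+1) i = ⨆ k : ℕ, (T^[m+1+k] x0 i - ((m+1+k:ℕ):ℝ)*lam) := by rw [hu_def]
        rw [e2]
        apply ciSup_le
        intro k
        have h1 : T (fun j => T^[m+k] x0 j - ((m+k:ℕ):ℝ)*lam) i ≤ T (u m) i :=
          (hmono (by intro j; exact hu_ge m k j)) i
        have h2 := shapley_iter_step T hadd (m+k) x0 (((m+k:ℕ):ℝ)*lam) i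
        rw [h2] at h1
        have e : m+1+k = m+k+1 := by omega
        rw [e]
        push_cast
        push_cast at h1
        linarith
      linarith
    -- the limsup: a super-eigenvector
    set w : Fin n → ℝ := fun i => ⨅ m : ℕ, u m i with hw_def
    have hbddw : ∀ i : Fin n, BddBelow (Set.range fun m : ℕ => u m i) := by
      intro i
      refine ⟨x0 i0 - 3*C, ?_⟩
      rintro y ⟨m, rfl⟩
      exact hu_lb m i
    have hw_le : ∀ (m : ℕ) (i : Fin n), w i ≤ u m i := by
      intro m i
      rw [hw_def]
      exact ciInf_le (hbddw i) m
    have hw_ub : ∀ i, w i ≤ x0 i0 + 3*C := fun i => le_trans (hw_le 0 i) (hu_le 0 i)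
    have hu_antichain : ∀ (i : Fin n), Antitone fun m => u m i :=
      fun i => antitone_nat_of_succ_le (fun m => hu_anti m i)
    have happrox : ∀ ε : ℝ, 0 < ε → ∃ m : ℕ, ∀ i, u m i ≤ w i + ε := by
      intro ε hε
      have h1 : ∀ i : Fin n, ∃ m, u m i < w i + ε := by
        intro i
        apply exists_lt_of_ciInf_lt (f := fun m => u m i)
        have e : (⨅ m : ℕ, u m i) = w i := by rw [hw_def]
        rw [e]
        linarith
      choose mfun hmfun using h1
      refine ⟨Finset.univ.sup mfun, ?_⟩
      intro i
      have hk : mfun i ≤ Finset.univ.sup mfun := Finset.le_sup (Finset.mem_univ i)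
      have := hu_antichain i hk
      have := hmfun i
      linarith
    have hsuper : ∀ i, lam + w i ≤ T w i := by
      intro i
      apply real_le_of_forall_pos
      intro ε hε
      obtain ⟨m, hm⟩ := happrox ε hε
      have h1 : T (u m) i ≤ T w i + ε := shapley_comp T hmono hadd (u m) w ε hm i
      have h2 := hu_super m i
      have h3 : w i ≤ u (m+1) i := hw_le (m+1) i
      linarith
    -- iterate the super-eigenvector upwards
    have hq_mono : ∀ (k : ℕ) (i : Fin n), T^[k] w i + lam ≤ T^[k+1] w i := by
      intro k
      induction k with
      | zero =>
        intro i
        simp only [zero_add, Function.iterate_zero_apply, Function.iterate_one]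
        have := hsuper i
        linarith
      | succ k ih =>
        intro i
        rw [Function.iterate_succ_apply' T (k+1), Function.iterate_succ_apply' T k]
        have := shapley_comp T hmono hadd (T^[k] w) (T^[k+1] w) (-lam)
          (fun j => by have := ih j; linarith) i
        rw [Function.iterate_succ_apply' T k] at this
        linarith
    have hpmono : ∀ i : Fin n, Monotone fun k : ℕ => T^[k] w i - (k:ℝ)*lam := by
      intro i
      apply monotone_nat_of_le_succ
      intro k
      have := hq_mono k i
      push_cast
      linarith
    have hq_ub : ∀ (k : ℕ) (i : Fin n), T^[k] w i - (k:ℝ)*lam ≤ x0 i0 + 7*C := by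
      intro k i
      have hwx : ∀ j, w j ≤ x0 j + 4*C := by
        intro j
        have h1 := hlo 0 j
        simp only [Function.iterate_zero_apply] at h1
        have h2 := hw_ub j
        linarith
      have h1 := shapley_iter_comp T hmono hadd k w x0 (4*C) hwx i
      have h2 := hzub k i
      linarith
    set ustar : Fin n → ℝ := fun i => ⨆ k : ℕ, (T^[k] w i - (k:ℝ)*lam) with hustar_def
    have hbddus : ∀ i : Fin n, BddAbove (Set.range fun k : ℕ => T^[k] w i - (k:ℝ)*lam) := by
      intro i
      refine ⟨x0 i0 + 7*C, ?_⟩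
      rintro y ⟨k, rfl⟩
      exact hq_ub k i
    have hustar_ge : ∀ (k : ℕ) (i : Fin n), T^[k] w i - (k:ℝ)*lam ≤ ustar i := by
      intro k i
      rw [hustar_def]
      exact le_ciSup (hbddus i) k
    have hge : ∀ i, lam + ustar i ≤ T ustar i := by
      intro i
      have h : ustar i ≤ T ustar i - lam := by
        rw [hustar_def]
        apply ciSup_le
        intro k
        have h1 : T (fun j => T^[k] w j - (k:ℝ)*lam) i ≤ T ustar i :=
          (hmono (by intro j; exact hustar_ge k j)) i
        have h2 := shapley_iter_step T hadd k w ((k:ℝ)*lam) i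
        rw [h2] at h1
        have h3 := hq_mono k i
        linarith
      linarith
    have hle : ∀ i, T ustar i ≤ lam + ustar i := by
      intro i
      apply real_le_of_forall_pos
      intro ε hε
      have h1 : ∀ j : Fin n, ∃ k : ℕ, ustar j - ε < T^[k] w j - (k:ℝ)*lam := by
        intro j
        apply exists_lt_of_lt_ciSup (f := fun k : ℕ => T^[k] w j - (k:ℝ)*lam)
        have e : (⨆ k : ℕ, (T^[k] w j - (k:ℝ)*lam)) = ustar j := by rw [hustar_def]
        rw [e]
        linarith
      choose kfun hkfun using h1
      have h2 : ∀ j, ustar j ≤ (T^[Finset.univ.sup kfun] w j -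
          ((Finset.univ.sup kfun : ℕ):ℝ)*lam) + ε := by
        intro j
        have hk : kfun j ≤ Finset.univ.sup kfun := Finset.le_sup (Finset.mem_univ j)
        have hx : T^[kfun j] w j - ((kfun j : ℕ):ℝ)*lam ≤
            T^[Finset.univ.sup kfun] w j - ((Finset.univ.sup kfun : ℕ):ℝ)*lam := hpmono j hk
        have hy := hkfun j
        linarith
      have h3 := shapley_comp T hmono hadd ustar _ ε h2 i
      have h4 := shapley_iter_step T hadd (Finset.univ.sup kfun) w
        (((Finset.univ.sup kfun : ℕ):ℝ)*lam) i
      rw [h4] at h3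
      have h5 := hustar_ge (Finset.univ.sup kfun + 1) i
      push_cast at h5
      linarith
    refine ⟨lam, ustar, ?_⟩
    funext i
    have e : (lam • (1 : Fin n → ℝ) + ustar) i = lam + ustar i := by simp
    rw [e]
    exact le_antisymm (hle i) (hge i)
end

section
/- Let T : ℝ³ → ℝ³ be defined by T₁(x) = h((x₂ ∧ x₃) − x₁) + x₁, T₂(x) = −h(x₁ − x₃) + x₁, T₃(x) = x₃, where h(z) = sup_{0<p≤1}(log p + pz) and ∧ denotes minimum. Then T is a Shapley operator (monotone and additively homogeneous), its recession operator 𝑇̂(x) = lim_{α→+∞} T(αx)/α exists and is given by 𝑇̂₁(x) = x₁ ∨ (x₂ ∧ x₃), 𝑇̂₂(x) = x₁ ∧ x₃, 𝑇̂₃(x) = x₃, and every vector of the form (α, 0, 0) with α ≥ 0 is a fixed point of 𝑇̂. -/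
noncomputable def hfun (z : ℝ) : ℝ :=
  ⨆ p : Set.Ioc (0 : ℝ) 1, (Real.log p + (p : ℝ) * z)

noncomputable def TShapley : (Fin 3 → ℝ) → (Fin 3 → ℝ) := fun x =>
  ![hfun (min (x 1) (x 2) - x 0) + x 0, -hfun (x 0 - x 2) + x 0, x 2]

noncomputable def Trec : (Fin 3 → ℝ) → (Fin 3 → ℝ) := fun x =>
  ![max (x 0) (min (x 1) (x 2)), min (x 0) (x 2), x 2]

/-! Each affine minorant `log p + p z` of `hfun` lies below `max z 0` and has slope `p ≤ 1`;
this gives monotonicity and `hfun (z + t) ≤ hfun z + t`, which make `TShapley` a Shapley operator.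
For the recession operator, `a⁻¹ hfun (a z)` is squeezed between `max z ((z - log a) / a)`
(the minorants `p = 1` and `p = 1 / a`) and `max z 0`. -/

open Real Filter Topology

instance : Nonempty (Set.Ioc (0 : ℝ) 1) := ⟨⟨1, by norm_num⟩⟩

lemma log_add_mul_le_max {p : ℝ} (hp : p ∈ Set.Ioc (0 : ℝ) 1) (z : ℝ) :
    log p + p * z ≤ max z 0 := by
  have hlog : log p ≤ 0 := log_nonpos hp.1.le hp.2
  have hpz : p * z ≤ max z 0 := by
    rcases le_total 0 z with hz | hz
    · nlinarith [hp.2, le_max_left z 0]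
    · nlinarith [hp.1, le_max_right z 0]
  linarith

lemma bddAbove_range_log_add_mul (z : ℝ) :
    BddAbove (Set.range fun p : Set.Ioc (0 : ℝ) 1 => log p + (p : ℝ) * z) :=
  ⟨max z 0, by rintro _ ⟨p, rfl⟩; exact log_add_mul_le_max p.2 z⟩

lemma log_add_mul_le_hfun {p : ℝ} (hp : p ∈ Set.Ioc (0 : ℝ) 1) (z : ℝ) :
    log p + p * z ≤ hfun z :=
  le_ciSup (f := fun p : Set.Ioc (0 : ℝ) 1 => log p + (p : ℝ) * z)
    (bddAbove_range_log_add_mul z) ⟨p, hp⟩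

lemma le_hfun (z : ℝ) : z ≤ hfun z := by
  simpa using log_add_mul_le_hfun (p := 1) (by norm_num) z

lemma hfun_le_max (z : ℝ) : hfun z ≤ max z 0 :=
  ciSup_le fun p => log_add_mul_le_max p.2 z

lemma hfun_mono : Monotone hfun := fun a b hab =>
  ciSup_le fun p => by
    have := log_add_mul_le_hfun p.2 b
    nlinarith [p.2.1]

lemma hfun_add_le {t : ℝ} (ht : 0 ≤ t) (z : ℝ) : hfun (z + t) ≤ hfun z + t :=
  ciSup_le fun p => by
    have := log_add_mul_le_hfun p.2 z
    nlinarith [p.2.2]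

lemma tendsto_inv_mul_hfun_mul (z : ℝ) :
    Tendsto (fun a : ℝ => a⁻¹ * hfun (a * z)) atTop (𝓝 (max z 0)) := by
  have hlower : Tendsto (fun a : ℝ => max z ((z - log a) / a)) atTop (𝓝 (max z 0)) := by
    have : Tendsto (fun a : ℝ => z * a⁻¹ - log a / a) atTop (𝓝 0) := by
      simpa using (tendsto_inv_atTop_zero.const_mul z).sub
        isLittleO_log_id_atTop.tendsto_div_nhds_zero
    refine tendsto_const_nhds.max (this.congr' ?_)
    filter_upwards with a
    ring
  refine tendsto_of_tendsto_of_tendsto_of_le_of_le' hlower tendsto_const_nhds ?_ ?_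
  · filter_upwards [eventually_ge_atTop 1] with a ha
    have ha0 : 0 < a := by linarith
    rw [le_inv_mul_iff₀ ha0, mul_max_of_nonneg _ _ ha0.le]
    refine max_le (le_hfun (a * z)) ?_
    have hmem : a⁻¹ ∈ Set.Ioc (0 : ℝ) 1 := ⟨by positivity, inv_le_one_of_one_le₀ ha⟩
    have := log_add_mul_le_hfun hmem (a * z)
    rw [log_inv, inv_mul_cancel_left₀ ha0.ne'] at this
    rw [mul_div_cancel₀ _ ha0.ne']
    linarith
  · filter_upwards [eventually_gt_atTop 0] with a ha
    rw [inv_mul_le_iff₀ ha, mul_max_of_nonneg _ _ ha.le, mul_zero]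
    exact hfun_le_max _

lemma hfun_sub_add_le_hfun_sub_add {u u' v v' : ℝ} (hu : u ≤ u') (hv : v ≤ v') :
    hfun (v - u) + u ≤ hfun (v' - u') + u' := by
  have hshift := hfun_add_le (sub_nonneg.2 hu) (v - u')
  rw [sub_add_sub_cancel] at hshift
  linarith [hfun_mono (sub_le_sub_right hv u')]

lemma neg_hfun_sub_add_le_neg_hfun_sub_add {u u' w w' : ℝ} (hu : u ≤ u') (hw : w ≤ w') :
    -hfun (u - w) + u ≤ -hfun (u' - w') + u' := by
  have hshift := hfun_add_le (sub_nonneg.2 hu) (u - w)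
  rw [sub_add_sub_cancel'] at hshift
  linarith [hfun_mono (sub_le_sub_left hw u')]

theorem monotone_TShapley : Monotone TShapley := by
  intro x y hxy i
  fin_cases i
  · exact hfun_sub_add_le_hfun_sub_add (hxy 0) (min_le_min (hxy 1) (hxy 2))
  · exact neg_hfun_sub_add_le_neg_hfun_sub_add (hxy 0) (hxy 2)
  · exact hxy 2

theorem TShapley_add_const_smul_one (x : Fin 3 → ℝ) (c : ℝ) :
    TShapley (x + c • (1 : Fin 3 → ℝ)) = TShapley x + c • (1 : Fin 3 → ℝ) := by
  ext i
  fin_cases i <;> simp [TShapley, min_add_add_right] <;> ring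

lemma inv_smul_TShapley_smul {a : ℝ} (ha : 0 < a) (x : Fin 3 → ℝ) :
    a⁻¹ • TShapley (a • x) =
      ![a⁻¹ * hfun (a * (min (x 1) (x 2) - x 0)) + x 0,
        x 0 - a⁻¹ * hfun (a * (x 0 - x 2)), x 2] := by
  ext i
  fin_cases i <;>
    simp [TShapley, ← mul_min_of_nonneg _ _ ha.le, mul_add, mul_sub, ha.ne', neg_add_eq_sub]

lemma Trec_eq (x : Fin 3 → ℝ) :
    Trec x = ![max (min (x 1) (x 2) - x 0) 0 + x 0, x 0 - max (x 0 - x 2) 0, x 2] := by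
  rw [Trec, ← max_add_add_right, sub_add_cancel, zero_add, max_comm, sub_sup, sub_sub_cancel,
    sub_zero, min_comm (x 2)]

theorem tendsto_inv_smul_TShapley_smul (x : Fin 3 → ℝ) :
    Tendsto (fun a : ℝ => a⁻¹ • TShapley (a • x)) atTop (𝓝 (Trec x)) := by
  rw [Trec_eq]
  refine (((tendsto_inv_mul_hfun_mul _).add_const _).matrixVecCons
    ((tendsto_const_nhds.sub (tendsto_inv_mul_hfun_mul _)).matrixVecCons
      tendsto_const_nhds)).congr' ?_
  filter_upwards [eventually_gt_atTop 0] with a ha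
  exact (inv_smul_TShapley_smul ha x).symm

theorem stmt19 :
    Monotone TShapley ∧
    (∀ (x : Fin 3 → ℝ) (c : ℝ),
      TShapley (x + c • (1 : Fin 3 → ℝ)) = TShapley x + c • (1 : Fin 3 → ℝ)) ∧
    (∀ x : Fin 3 → ℝ,
      Filter.Tendsto (fun a : ℝ => a⁻¹ • TShapley (a • x)) Filter.atTop (nhds (Trec x))) ∧
    (∀ a : ℝ, 0 ≤ a → Trec ![a, 0, 0] = ![a, 0, 0]) :=
  ⟨monotone_TShapley, TShapley_add_const_smul_one, tendsto_inv_smul_TShapley_smul,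
    fun a ha => by simp [Trec, ha]⟩
end
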